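/- Let A be a finite-dimensional algebra over a field k and e ∈ A an idempotent such that eA is a projective left eAe-module and the map Ae → Hom_{eAe}(eA, eAe) sending xe to the map ey ↦ eyxe (x, y ∈ A) is bijective. Then domdim(A) ≤ domdim(eAe) ≤ domdim(_A Ae), where domdim(_A Ae) is the dominant dimension of Ae as a left A-module. -/

import Mathlib

/-!
Statement 14: Let `A` be a finite-dimensional algebra over a field `k` and `e ∈ A` an
idempotent such that `eA` is a projective left `eAe`-module and the canonical map
`Ae → Hom_{eAe}(eA, eAe)`, `xe ↦ (ey ↦ eyxe)`, is bijective.  Then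
`domdim(A) ≤ domdim(eAe) ≤ domdim(_A Ae)`.
-/

universe u
/-- `domdimGE R n M` holds iff there is an exact sequence
`0 → M → I^0 → ⋯ → I^(n-1)` of left `R`-modules in which every `I^j` is both
projective and injective; i.e. the dominant dimension of `M` is at least `n`. -/
def domdimGE (R : Type u) [Ring R] :
    ℕ → (M : Type u) → [AddCommGroup M] → [Module R M] → Prop
  | 0, _, _, _ => True
  | (n+1), M, iM, mM =>
      letI := iM; letI := mM
      ∃ (I : Type u) (_ : AddCommGroup I) (_ : Module R I),
        Module.Projective R I ∧ Module.Injective R I ∧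
        ∃ f : M →ₗ[R] I, Function.Injective f ∧ domdimGE R n (I ⧸ LinearMap.range f)

section Corner

variable (A : Type u) [Ring A] (e : A)

/-- The additive subgroup `eAe` of `A`. -/
def cornerAddSubgroup : AddSubgroup A where
  carrier := {x | e * x * e = x}
  add_mem' := by
    intro a b ha hb
    simp only [Set.mem_setOf_eq] at *
    rw [mul_add, add_mul, ha, hb]
  zero_mem' := by simp
  neg_mem' := by
    intro a ha
    simp only [Set.mem_setOf_eq] at *
    rw [mul_neg, neg_mul, ha]

/-- The corner `eAe` of `A` at the idempotent `e`. -/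
abbrev Corner : Type u := ↥(cornerAddSubgroup A e)

lemma corner_left_mul {A : Type u} [Ring A] {e : A} (he : e * e = e) (x : Corner A e) :
    e * (x : A) = (x : A) := by
  conv_lhs => rw [← (x.2 : e * (x : A) * e = x)]
  rw [← mul_assoc, ← mul_assoc, he, (x.2 : e * (x : A) * e = x)]

lemma corner_right_mul {A : Type u} [Ring A] {e : A} (he : e * e = e) (x : Corner A e) :
    (x : A) * e = (x : A) := by
  conv_lhs => rw [← (x.2 : e * (x : A) * e = x)]
  rw [mul_assoc, he, (x.2 : e * (x : A) * e = x)]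

/-- The ring structure on the corner `eAe`, with unit `e`. -/
@[reducible] noncomputable def cornerRing (he : e * e = e) : Ring (Corner A e) := by
  letI : Mul (Corner A e) :=
    ⟨fun x y => ⟨(x : A) * (y : A), by
      show e * ((x : A) * (y : A)) * e = (x : A) * (y : A)
      rw [← mul_assoc e (x : A) (y : A), corner_left_mul he x,
        mul_assoc (x : A) (y : A) e, corner_right_mul he y]⟩⟩
  letI : One (Corner A e) := ⟨⟨e, by show e * e * e = e; rw [he, he]⟩⟩
  exact
  { (inferInstance : AddCommGroup (Corner A e)) with
    mul := (· * ·)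
    one := 1
    left_distrib := fun a b c => Subtype.ext (mul_add (a : A) (b : A) (c : A))
    right_distrib := fun a b c => Subtype.ext (add_mul (a : A) (b : A) (c : A))
    zero_mul := fun a => Subtype.ext (zero_mul (a : A))
    mul_zero := fun a => Subtype.ext (mul_zero (a : A))
    mul_assoc := fun a b c => Subtype.ext (mul_assoc (a : A) (b : A) (c : A))
    one_mul := fun a => Subtype.ext (corner_left_mul he a)
    mul_one := fun a => Subtype.ext (corner_right_mul he a) }

/-- The additive subgroup `eA` of `A`. -/
def eASubgroup : AddSubgroup A where
  carrier := {x | e * x = x}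
  add_mem' := by
    intro a b ha hb
    simp only [Set.mem_setOf_eq] at *
    rw [mul_add, ha, hb]
  zero_mem' := by simp
  neg_mem' := by
    intro a ha
    simp only [Set.mem_setOf_eq] at *
    rw [mul_neg, ha]

/-- `eA` as a type. -/
abbrev EA : Type u := ↥(eASubgroup A e)

/-- The additive subgroup `Ae` of `A`. -/
def aeSubgroup : AddSubgroup A where
  carrier := {x | x * e = x}
  add_mem' := by
    intro a b ha hb
    simp only [Set.mem_setOf_eq] at *
    rw [add_mul, ha, hb]
  zero_mem' := by simp
  neg_mem' := by
    intro a ha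
    simp only [Set.mem_setOf_eq] at *
    rw [neg_mul, ha]

/-- `Ae` as a type. -/
abbrev AE : Type u := ↥(aeSubgroup A e)

/-- `Ae` is a left `A`-module. -/
instance aeModule : Module A (AE A e) where
  smul a x := ⟨a * (x : A), by
    show a * (x : A) * e = a * (x : A)
    rw [mul_assoc, (x.2 : (x : A) * e = x)]⟩
  one_smul x := Subtype.ext (one_mul (x : A))
  mul_smul a b x := Subtype.ext (mul_assoc a b (x : A))
  smul_zero a := Subtype.ext (mul_zero a)
  smul_add a x y := Subtype.ext (mul_add a (x : A) (y : A))
  add_smul a b x := Subtype.ext (add_mul a b (x : A))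
  zero_smul x := Subtype.ext (zero_mul (x : A))

/-- `eA` is a left `eAe`-module. -/
noncomputable def eaModule (he : e * e = e) :
    letI := cornerRing A e he
    Module (Corner A e) (EA A e) := by
  letI := cornerRing A e he
  exact
  { smul := fun s x => ⟨(s : A) * (x : A), by
      show e * ((s : A) * (x : A)) = (s : A) * (x : A)
      rw [← mul_assoc, corner_left_mul he s]⟩
    one_smul := fun x => Subtype.ext (x.2 : e * (x : A) = x)
    mul_smul := fun s t x => Subtype.ext (mul_assoc (s : A) (t : A) (x : A))
    smul_zero := fun s => Subtype.ext (mul_zero (s : A))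
    smul_add := fun s x y => Subtype.ext (mul_add (s : A) (x : A) (y : A))
    add_smul := fun s t x => Subtype.ext (add_mul (s : A) (t : A) (x : A))
    zero_smul := fun x => Subtype.ext (zero_mul (x : A)) }

/-- The canonical map `Ae → Hom_{eAe}(eA, eAe)` sending `xe` to `ey ↦ eyxe`. -/
noncomputable def etaMap (he : e * e = e) :
    AE A e →
      (letI := cornerRing A e he
       letI := eaModule A e he
       (EA A e) →ₗ[Corner A e] (Corner A e)) := by
  letI := cornerRing A e he
  letI := eaModule A e he
  intro x
  exact
  { toFun := fun y => ⟨(y : A) * (x : A), by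
      show e * ((y : A) * (x : A)) * e = (y : A) * (x : A)
      rw [← mul_assoc e (y : A) (x : A), (y.2 : e * (y : A) = y),
        mul_assoc (y : A) (x : A) e, (x.2 : (x : A) * e = x)]⟩
    map_add' := fun y z => Subtype.ext (add_mul (y : A) (z : A) (x : A))
    map_smul' := fun s y => Subtype.ext (mul_assoc (s : A) (y : A) (x : A)) }

end Corner

/-!
Write `B = eAe`, `F = e(-) : A-Mod → B-Mod` and `G = Hom_B(eA, -) : B-Mod → A-Mod`. Then
`F ⊣ G`, `F` is exact, and `G` is exact because `eA` is projective. Since `A` is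
finite-dimensional, `eA` is a finitely generated projective `B`-module, and bijectivity of `η`
turns a dual basis of `eA` into one of the right `B`-module `Ae`; this makes `G ≅ Ae ⊗_B -` and
hence also `G ⊣ F`. A left adjoint of an exact functor preserves projectives and a right adjoint
of one preserves injectives, so `F` and `G` carry the resolutions witnessing dominant dimension
to resolutions of the same length. Finally `F A = eA` has `B` as a direct summand, `G B ≅ Ae` via
`η`, and a direct summand has at least the dominant dimension of the whole module, by a
Schanuel-type comparison of cokernels.
-/

section DomdimGE

variable {R : Type u} [Ring R]

lemma Module.Projective.of_subsingleton {M : Type u} [AddCommGroup M] [Module R M]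
    [Subsingleton M] : Module.Projective R M :=
  ⟨⟨0, fun _ => Subsingleton.elim _ _⟩⟩

lemma Module.Injective.of_subsingleton {M : Type u} [AddCommGroup M] [Module R M]
    [Subsingleton M] : Module.Injective R M :=
  ⟨fun _ _ _ _ _ _ _ _ _ => ⟨0, fun _ => Subsingleton.elim _ _⟩⟩

lemma Module.Injective.prod {M N : Type u} [AddCommGroup M] [AddCommGroup N]
    [Module R M] [Module R N] (hM : Module.Injective R M) (hN : Module.Injective R N) :
    Module.Injective R (M × N) := by
  refine ⟨fun X Y _ _ _ _ f hf g => ?_⟩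
  obtain ⟨h₁, hh₁⟩ := hM.out f hf (LinearMap.fst R M N ∘ₗ g)
  obtain ⟨h₂, hh₂⟩ := hN.out f hf (LinearMap.snd R M N ∘ₗ g)
  exact ⟨h₁.prod h₂, fun x => Prod.ext (hh₁ x) (hh₂ x)⟩

lemma Function.Exact.prodMap {M N P M' N' P' : Type u} [AddCommGroup M] [AddCommGroup N]
    [AddCommGroup P] [AddCommGroup M'] [AddCommGroup N'] [AddCommGroup P'] [Module R M]
    [Module R N] [Module R P] [Module R M'] [Module R N'] [Module R P']
    {f : M →ₗ[R] N} {g : N →ₗ[R] P} {f' : M' →ₗ[R] N'} {g' : N' →ₗ[R] P'}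
    (h : Function.Exact f g) (h' : Function.Exact f' g') :
    Function.Exact (f.prodMap f') (g.prodMap g') := by
  rintro ⟨y, y'⟩
  change (g y, g' y') = 0 ↔ _
  rw [Prod.mk_eq_zero, h y, h' y']
  exact ⟨fun ⟨⟨x, hx⟩, ⟨x', hx'⟩⟩ => ⟨(x, x'), Prod.ext hx hx'⟩,
    fun ⟨x, hx⟩ => ⟨⟨x.1, congrArg Prod.fst hx⟩, ⟨x.2, congrArg Prod.snd hx⟩⟩⟩

lemma domdimGE_of_linearEquiv {n : ℕ} : ∀ {M N : Type u} [AddCommGroup M] [AddCommGroup N]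
    [Module R M] [Module R N], (M ≃ₗ[R] N) → domdimGE R n M → domdimGE R n N := by
  induction n with
  | zero => intros; trivial
  | succ n ih =>
    rintro M N _ _ _ _ φ ⟨I, _, _, hP, hI, f, hf, hQ⟩
    have hrange : LinearMap.range (f ∘ₗ φ.symm.toLinearMap) = LinearMap.range f := by
      rw [LinearMap.range_comp, LinearEquiv.range, Submodule.map_top]
    exact ⟨I, _, _, hP, hI, f ∘ₗ φ.symm.toLinearMap, hf.comp φ.symm.injective,
      ih (Submodule.quotEquivOfEq _ _ hrange.symm) hQ⟩

lemma domdimGE_of_subsingleton (n : ℕ) (M : Type u) [AddCommGroup M] [Module R M]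
    [Subsingleton M] : domdimGE R n M := by
  induction n generalizing M with
  | zero => trivial
  | succ n ih =>
    refine ⟨M, _, _, .of_subsingleton, .of_subsingleton, LinearMap.id, Function.injective_id,
      ?_⟩
    exact ih _

lemma domdimGE_of_projective_of_injective (n : ℕ) {M : Type u} [AddCommGroup M] [Module R M]
    (hP : Module.Projective R M) (hI : Module.Injective R M) : domdimGE R n M := by
  cases n with
  | zero => trivial
  | succ n =>
    refine ⟨M, _, _, hP, hI, LinearMap.id, Function.injective_id, ?_⟩
    have : Subsingleton (M ⧸ LinearMap.range (LinearMap.id : M →ₗ[R] M)) := by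
      rw [Submodule.Quotient.subsingleton_iff, LinearMap.range_id]
    exact domdimGE_of_subsingleton n _

lemma domdimGE_prod {n : ℕ} : ∀ {M N : Type u} [AddCommGroup M] [AddCommGroup N]
    [Module R M] [Module R N], domdimGE R n M → domdimGE R n N → domdimGE R n (M × N) := by
  induction n with
  | zero => intros; trivial
  | succ n ih =>
    rintro M N _ _ _ _ ⟨I, _, _, hPI, hII, f, hf, hQ⟩ ⟨J, _, _, hPJ, hIJ, g, hg, hQ'⟩
    have hexact := (LinearMap.exact_map_mkQ_range f).prodMap (LinearMap.exact_map_mkQ_range g)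
    refine ⟨I × J, _, _, inferInstance, hII.prod hIJ, f.prodMap g, hf.prodMap hg, ?_⟩
    exact domdimGE_of_linearEquiv (hexact.linearEquivOfSurjective
      ((Submodule.mkQ_surjective _).prodMap (Submodule.mkQ_surjective _))).symm (ih hQ hQ')

section CokernelOfProd

variable {M I I' : Type u} [AddCommGroup M] [AddCommGroup I] [AddCommGroup I'] [Module R M]
  [Module R I] [Module R I'] (f : M →ₗ[R] I) (f' : M →ₗ[R] I') (h : I →ₗ[R] I')

def cokernelProdMap : I × I' →ₗ[R] (I ⧸ LinearMap.range f) × I' :=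
  ((LinearMap.range f).mkQ ∘ₗ LinearMap.fst R I I').prod
    (LinearMap.snd R I I' - h ∘ₗ LinearMap.fst R I I')

lemma exact_prod_cokernelProdMap (hh : ∀ x, h (f x) = f' x) :
    Function.Exact (f.prod f') (cokernelProdMap f h) := by
  rintro ⟨a, b⟩
  change (Submodule.Quotient.mk a, b - h a) = 0 ↔ _
  rw [Prod.mk_eq_zero, Submodule.Quotient.mk_eq_zero, sub_eq_zero]
  constructor
  · rintro ⟨⟨x, rfl⟩, rfl⟩
    exact ⟨x, Prod.ext rfl (hh x).symm⟩
  · rintro ⟨x, hx⟩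
    obtain ⟨rfl, rfl⟩ := Prod.ext_iff.mp hx
    exact ⟨⟨x, rfl⟩, (hh x).symm⟩

lemma surjective_cokernelProdMap : Function.Surjective (cokernelProdMap f h) := by
  rintro ⟨q, b⟩
  obtain ⟨a, rfl⟩ := Submodule.mkQ_surjective _ q
  exact ⟨(a, b + h a), by simp [cokernelProdMap]⟩

noncomputable def quotientRangeProdEquiv (hh : ∀ x, h (f x) = f' x) :
    ((I × I') ⧸ LinearMap.range (f.prod f')) ≃ₗ[R] (I ⧸ LinearMap.range f) × I' :=
  (exact_prod_cokernelProdMap f f' h hh).linearEquivOfSurjective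
    (surjective_cokernelProdMap f h)

end CokernelOfProd

lemma domdimGE_of_prod_left {n : ℕ} : ∀ {M N : Type u} [AddCommGroup M] [AddCommGroup N]
    [Module R M] [Module R N], domdimGE R n (M × N) → domdimGE R n M := by
  induction n with
  | zero => intros; trivial
  | succ n ih =>
    rintro M N _ _ _ _ ⟨I, _, _, hP, hI, f, hf, hQ⟩
    set f₁ := f ∘ₗ LinearMap.inl R M N
    set f₂ := f ∘ₗ LinearMap.inr R M N
    have hf₁ : Function.Injective f₁ := hf.comp LinearMap.inl_injective
    have hf₂ : Function.Injective f₂ := hf.comp LinearMap.inr_injective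
    have hexact := (LinearMap.exact_map_mkQ_range f₁).prodMap (LinearMap.exact_map_mkQ_range f₂)
    set v := f₁.prodMap f₂
    obtain ⟨h₀, hh₀⟩ := (hI.prod hI).out f hf v
    obtain ⟨h₁, hh₁⟩ := hI.out v (hf₁.prodMap hf₂) f
    -- `coker f × I²` and `(coker f₁ × coker f₂) × I` are both the cokernel of
    -- `(f, v) : M × N → I × I²`, because `I` and `I²` are injective.
    have hswap : Submodule.map (LinearEquiv.prodComm R I (I × I)).toLinearMap
        (LinearMap.range (f.prod v)) = LinearMap.range (v.prod f) := by
      rw [← LinearMap.range_comp]; rfl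
    let e : ((I ⧸ LinearMap.range f) × (I × I)) ≃ₗ[R]
        ((I ⧸ LinearMap.range f₁) × (I ⧸ LinearMap.range f₂)) × I :=
      (quotientRangeProdEquiv f v h₀ hh₀).symm ≪≫ₗ
        Submodule.Quotient.equiv _ _ (LinearEquiv.prodComm R I (I × I)) hswap ≪≫ₗ
        quotientRangeProdEquiv v f h₁ hh₁ ≪≫ₗ
        (hexact.linearEquivOfSurjective ((Submodule.mkQ_surjective _).prodMap
          (Submodule.mkQ_surjective _))).prodCongr (LinearEquiv.refl R I)
    have hI2 : domdimGE R n (I × I) := domdimGE_of_projective_of_injective n inferInstance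
      (hI.prod hI)
    exact ⟨I, _, _, hP, hI, f₁, hf₁,
      ih (ih (domdimGE_of_linearEquiv e (domdimGE_prod hQ hI2)))⟩

lemma domdimGE_of_retract {n : ℕ} {M N : Type u} [AddCommGroup M] [AddCommGroup N]
    [Module R M] [Module R N] (i : N →ₗ[R] M) (p : M →ₗ[R] N)
    (hpi : p ∘ₗ i = LinearMap.id) (h : domdimGE R n M) : domdimGE R n N := by
  obtain ⟨e, -⟩ := (LinearMap.exact_subtype_ker_map p).splitSurjectiveEquiv
    (Submodule.injective_subtype _) ⟨i, hpi⟩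
  exact domdimGE_of_prod_left (domdimGE_of_linearEquiv (e ≪≫ₗ LinearEquiv.prodComm R _ _) h)

end DomdimGE

section Corner

variable {A : Type u} [Ring A] {e : A}

variable (e) in
/-- `eM`, as the fixed points of `e`. -/
def eAddSubgroup (M : Type u) [AddCommGroup M] [Module A M] : AddSubgroup M where
  carrier := {m | e • m = m}
  add_mem' ha hb := by simp_all [smul_add]
  zero_mem' := smul_zero e
  neg_mem' ha := by simp_all [smul_neg]

variable (e) in
abbrev EMod (M : Type u) [AddCommGroup M] [Module A M] : Type u := eAddSubgroup e M

variable (e) in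
/-- `x j` together with the coordinate functions `v ↦ v * z j` form a dual basis of the
`eAe`-module `eA`; symmetrically `z j` and `w ↦ x j * w` form one of `Ae` over `eAe`. -/
structure CornerDualBasis where
  n : ℕ
  x : Fin n → EA A e
  z : Fin n → AE A e
  sum_ea : ∀ v : EA A e, ∑ j, (v : A) * z j * x j = v
  sum_ae : ∀ w : AE A e, ∑ j, (z j : A) * x j * w = w

namespace CornerDualBasis

lemma sum_smul_sum_smul (d : CornerDualBasis e) {M : Type u} [AddCommGroup M] [Module A M]
    (a : A) (m : Fin d.n → M) :
    ∑ j, (d.z j : A) • ∑ i, ((d.x j : A) * a * d.z i) • m i =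
      a • ∑ i, (d.z i : A) • m i := by
  have hz (i) : ∑ j, (d.z j : A) * ((d.x j : A) * a * d.z i) = a * d.z i := by
    have hw : a * d.z i * e = a * d.z i := by rw [mul_assoc, (d.z i).2]
    simpa only [mul_assoc] using d.sum_ae ⟨a * d.z i, hw⟩
  simp only [Finset.smul_sum, smul_smul]
  rw [Finset.sum_comm]
  refine Finset.sum_congr rfl fun i _ => ?_
  rw [← Finset.sum_smul, hz, mul_smul]

end CornerDualBasis

variable [Fact (e * e = e)]

noncomputable instance : Ring (Corner A e) := cornerRing A e Fact.out

noncomputable instance : Module (Corner A e) (EA A e) := eaModule A e Fact.out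

namespace EMod

variable {M N P : Type u} [AddCommGroup M] [AddCommGroup N] [AddCommGroup P] [Module A M]
  [Module A N] [Module A P]

noncomputable instance : Module (Corner A e) (EMod e M) where
  smul s m := ⟨(s : A) • (m : M), by
    show e • (s : A) • (m : M) = _
    rw [← mul_smul, corner_left_mul Fact.out s]⟩
  one_smul m := Subtype.ext m.2
  mul_smul s t m := Subtype.ext (mul_smul (s : A) (t : A) (m : M))
  smul_zero s := Subtype.ext (smul_zero (s : A))
  smul_add s m m' := Subtype.ext (smul_add (s : A) (m : M) m')
  add_smul s t m := Subtype.ext (add_smul (s : A) (t : A) (m : M))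
  zero_smul m := Subtype.ext (zero_smul A (m : M))

variable (e) in
def proj (m : M) : EMod e M :=
  ⟨e • m, show e • e • m = e • m by rw [← mul_smul, (Fact.out : e * e = e)]⟩

lemma proj_coe (m : EMod e M) : proj e (m : M) = m :=
  Subtype.ext m.2

lemma coe_smul (s : Corner A e) (m : EMod e M) : ((s • m : EMod e M) : M) = (s : A) • (m : M) :=
  rfl

variable (e) in
noncomputable def map (f : M →ₗ[A] N) : EMod e M →ₗ[Corner A e] EMod e N where
  toFun m := ⟨f m, show e • f m = f m by rw [← map_smul, m.2]⟩
  map_add' m m' := Subtype.ext (map_add f _ _)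
  map_smul' s m := Subtype.ext (map_smul f (s : A) (m : M))

lemma map_proj (f : M →ₗ[A] N) (m : M) : map e f (proj e m) = proj e (f m) :=
  Subtype.ext (map_smul f e m)

lemma map_injective {f : M →ₗ[A] N} (hf : Function.Injective f) :
    Function.Injective (map e f) :=
  fun _ _ h => Subtype.ext (hf (congrArg Subtype.val h))

lemma map_surjective {f : M →ₗ[A] N} (hf : Function.Surjective f) :
    Function.Surjective (map e f) := by
  intro n
  obtain ⟨m, hm⟩ := hf n
  exact ⟨proj e m, by rw [map_proj, hm, proj_coe]⟩

lemma exact_map {f : M →ₗ[A] N} {g : N →ₗ[A] P} (h : Function.Exact f g) :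
    Function.Exact (map e f) (map e g) := by
  intro n
  constructor
  · intro hn
    obtain ⟨m, hm⟩ := (h n).mp (congrArg Subtype.val hn)
    exact ⟨proj e m, by rw [map_proj, hm, proj_coe]⟩
  · rintro ⟨m, rfl⟩
    exact Subtype.ext (h.apply_apply_eq_zero (m : M))

variable (e) in
noncomputable def quotEquiv (f : M →ₗ[A] N) :
    (EMod e N ⧸ LinearMap.range (map e f)) ≃ₗ[Corner A e] EMod e (N ⧸ LinearMap.range f) :=
  (exact_map (LinearMap.exact_map_mkQ_range f)).linearEquivOfSurjective
    (map_surjective (Submodule.mkQ_surjective _))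

end EMod

namespace EA

noncomputable def mulRight (a : A) : EA A e →ₗ[Corner A e] EA A e where
  toFun v := ⟨v * a, show e * (v * a) = v * a by rw [← mul_assoc, v.2]⟩
  map_add' v w := Subtype.ext (add_mul (v : A) w a)
  map_smul' s v := Subtype.ext (mul_assoc (s : A) v a)

end EA

variable (e) in
abbrev HomEA (N : Type u) [AddCommGroup N] [Module (Corner A e) N] : Type u :=
  EA A e →ₗ[Corner A e] N

namespace HomEA

variable {N N' N'' : Type u} [AddCommGroup N] [AddCommGroup N'] [AddCommGroup N'']
  [Module (Corner A e) N] [Module (Corner A e) N'] [Module (Corner A e) N'']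

noncomputable instance : Module A (HomEA e N) where
  smul a φ := φ ∘ₗ EA.mulRight a
  one_smul φ := LinearMap.ext fun v => congrArg φ (Subtype.ext (mul_one (v : A)))
  mul_smul a b φ := LinearMap.ext fun v => congrArg φ (Subtype.ext (mul_assoc (v : A) a b).symm)
  smul_zero _ := rfl
  smul_add _ _ _ := rfl
  add_smul a b φ := LinearMap.ext fun v => by
    change φ (EA.mulRight (a + b) v) = φ (EA.mulRight a v) + φ (EA.mulRight b v)
    rw [← map_add]
    exact congrArg φ (Subtype.ext (mul_add (v : A) a b))
  zero_smul φ := LinearMap.ext fun v => by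
    change φ (EA.mulRight 0 v) = 0
    rw [show EA.mulRight 0 v = 0 from Subtype.ext (mul_zero (v : A)), map_zero]

lemma smul_apply (a : A) (φ : HomEA e N) (v : EA A e) : (a • φ) v = φ (EA.mulRight a v) :=
  rfl

variable (e) in
noncomputable def map (g : N →ₗ[Corner A e] N') : HomEA e N →ₗ[A] HomEA e N' where
  toFun φ := g ∘ₗ φ
  map_add' φ ψ := LinearMap.comp_add φ ψ g
  map_smul' _ _ := rfl

lemma map_injective {g : N →ₗ[Corner A e] N'} (hg : Function.Injective g) :
    Function.Injective (map e g) :=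
  fun _ _ h => LinearMap.ext fun v => hg (LinearMap.congr_fun h v)

lemma map_surjective [Module.Projective (Corner A e) (EA A e)] {g : N →ₗ[Corner A e] N'}
    (hg : Function.Surjective g) : Function.Surjective (map e g) :=
  fun φ => Module.projective_lifting_property g φ hg

lemma exact_map {f : N →ₗ[Corner A e] N'} {g : N' →ₗ[Corner A e] N''}
    (h : Function.Exact f g) (hf : Function.Injective f) :
    Function.Exact (map e f) (map e g) := by
  intro φ
  constructor
  · intro hφ
    have hmem : ∀ v, φ v ∈ LinearMap.range f := fun v =>
      (h (φ v)).mp (LinearMap.congr_fun hφ v)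
    refine ⟨(LinearEquiv.ofInjective f hf).symm.toLinearMap ∘ₗ
      LinearMap.codRestrict _ φ hmem, LinearMap.ext fun v => ?_⟩
    exact congrArg Subtype.val
      ((LinearEquiv.ofInjective f hf).apply_symm_apply (LinearMap.codRestrict _ φ hmem v))
  · rintro ⟨ψ, rfl⟩
    exact LinearMap.ext fun v => h.apply_apply_eq_zero (ψ v)

variable (e) in
noncomputable def quotEquiv [Module.Projective (Corner A e) (EA A e)]
    (f : N →ₗ[Corner A e] N') (hf : Function.Injective f) :
    (HomEA e N' ⧸ LinearMap.range (map e f)) ≃ₗ[A] HomEA e (N' ⧸ LinearMap.range f) :=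
  (exact_map (LinearMap.exact_map_mkQ_range f) hf).linearEquivOfSurjective
    (map_surjective (Submodule.mkQ_surjective _))

end HomEA

variable (A e) in
def EA.idem : EA A e := ⟨e, (Fact.out : e * e = e)⟩

lemma EA.mulRight_idem (s : Corner A e) : EA.mulRight (s : A) (EA.idem A e) = s • EA.idem A e :=
  Subtype.ext ((corner_left_mul Fact.out s).trans (corner_right_mul Fact.out s).symm)

lemma coe_etaMap (w : AE A e) (v : EA A e) : (etaMap A e Fact.out w v : A) = v * w := rfl

variable (A e) in
def AE.idem : AE A e := ⟨e, (Fact.out : e * e = e)⟩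

namespace EMod

variable {M M' N N' : Type u} [AddCommGroup M] [AddCommGroup M'] [Module A M] [Module A M']
  [AddCommGroup N] [AddCommGroup N'] [Module (Corner A e) N] [Module (Corner A e) N']

def eaSMul (v : EA A e) (m : M) : EMod e M :=
  ⟨(v : A) • m, show e • (v : A) • m = (v : A) • m by rw [← mul_smul, v.2]⟩

noncomputable def homEquiv :
    (EMod e M →ₗ[Corner A e] N) ≃ (M →ₗ[A] HomEA e N) where
  toFun g :=
    { toFun m :=
        { toFun v := g (eaSMul v m)
          map_add' v w := by
            rw [← map_add]; exact congrArg g (Subtype.ext (add_smul (v : A) w m))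
          map_smul' s v := by
            rw [← map_smul]; exact congrArg g (Subtype.ext (mul_smul (s : A) (v : A) m)) }
      map_add' m m' := LinearMap.ext fun v => by
        simp only [LinearMap.coe_mk, AddHom.coe_mk, LinearMap.add_apply, ← map_add]
        exact congrArg g (Subtype.ext (smul_add (v : A) m m'))
      map_smul' a m := LinearMap.ext fun v =>
        congrArg g (Subtype.ext (mul_smul (v : A) a m).symm) }
  invFun h :=
    { toFun q := h q (EA.idem A e)
      map_add' q q' := by
        change h ((q : M) + q') (EA.idem A e) = _
        rw [map_add, LinearMap.add_apply]
      map_smul' s q := by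
        change h ((s : A) • (q : M)) (EA.idem A e) = s • h q (EA.idem A e)
        rw [map_smul, HomEA.smul_apply, EA.mulRight_idem, map_smul] }
  left_inv g := LinearMap.ext fun q => congrArg g (Subtype.ext q.2)
  right_inv h := LinearMap.ext fun m => LinearMap.ext fun v => by
    change h ((v : A) • m) (EA.idem A e) = h m v
    rw [map_smul, HomEA.smul_apply]
    exact congrArg (h m) (Subtype.ext v.2)

lemma homEquiv_comp (g : EMod e M' →ₗ[Corner A e] N) (j : M →ₗ[A] M') :
    homEquiv (g ∘ₗ map e j) = homEquiv g ∘ₗ j :=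
  LinearMap.ext fun m => LinearMap.ext fun v =>
    congrArg g (Subtype.ext (map_smul j (v : A) m))

lemma homEquiv_symm_comp (h : M →ₗ[A] HomEA e N) (s : N →ₗ[Corner A e] N') :
    homEquiv.symm (HomEA.map e s ∘ₗ h) = s ∘ₗ homEquiv.symm h :=
  rfl

lemma projective [Module.Projective (Corner A e) (EA A e)] (hM : Module.Projective A M) :
    Module.Projective (Corner A e) (EMod e M) := by
  refine Module.Projective.of_lifting_property fun s g hs => ?_
  obtain ⟨ℓ, hℓ⟩ := Module.projective_lifting_property (HomEA.map e s) (homEquiv g)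
    (HomEA.map_surjective hs)
  exact ⟨homEquiv.symm ℓ, by rw [← homEquiv_symm_comp, hℓ, Equiv.symm_apply_apply]⟩

end EMod

lemma HomEA.injective {N : Type u} [AddCommGroup N] [Module (Corner A e) N]
    (hN : Module.Injective (Corner A e) N) : Module.Injective A (HomEA e N) := by
  refine ⟨fun X Y _ _ _ _ j hj g => ?_⟩
  obtain ⟨ψ, hψ⟩ := hN.out (EMod.map e j) (EMod.map_injective hj) (EMod.homEquiv.symm g)
  have hψ' : ψ ∘ₗ EMod.map e j = EMod.homEquiv.symm g := LinearMap.ext hψ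
  refine ⟨EMod.homEquiv ψ, fun x => ?_⟩
  change (EMod.homEquiv ψ ∘ₗ j) x = g x
  rw [← EMod.homEquiv_comp, hψ', Equiv.apply_symm_apply]

namespace CornerDualBasis

lemma sum_etaMap_smul (d : CornerDualBasis e) (v : EA A e) :
    ∑ j, etaMap A e Fact.out (d.z j) v • d.x j = v :=
  Subtype.ext (by rw [AddSubmonoidClass.coe_finsetSum]; exact d.sum_ea v)

end CornerDualBasis

namespace HomEA

variable {M M' N N' : Type u} [AddCommGroup M] [AddCommGroup M'] [Module A M] [Module A M']
  [AddCommGroup N] [AddCommGroup N'] [Module (Corner A e) N] [Module (Corner A e) N']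

variable (e) in
/-- `v ↦ (v * e) • n`. -/
noncomputable def ofElement (n : N) : HomEA e N :=
  (etaMap A e Fact.out (AE.idem A e)).smulRight n

lemma ofElement_apply (n : N) (v : EA A e) :
    ofElement e n v = etaMap A e Fact.out (AE.idem A e) v • n :=
  rfl

lemma ofElement_smul (s : Corner A e) (n : N) :
    ofElement e (s • n) = (s : A) • ofElement e n := by
  ext v
  rw [smul_apply, ofElement_apply, ofElement_apply, smul_smul]
  congr 1
  refine Subtype.ext (show (v : A) * e * s = v * s * e from ?_)
  rw [mul_assoc, mul_assoc, corner_left_mul Fact.out s, corner_right_mul Fact.out s]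

lemma map_ofElement (g : N →ₗ[Corner A e] N') (n : N) :
    map e g (ofElement e n) = ofElement e (g n) :=
  LinearMap.ext fun _ => map_smul g _ n

lemma idem_smul_ofElement (n : N) : e • ofElement e n = ofElement e n := by
  ext v
  rw [smul_apply, ofElement_apply, ofElement_apply]
  congr 1
  exact Subtype.ext (show (v : A) * e * e = v * e by rw [mul_assoc, (Fact.out : e * e = e)])

lemma ofElement_add (n n' : N) : ofElement e (n + n') = ofElement e n + ofElement e n' :=
  LinearMap.ext fun _ => smul_add _ n n'

variable (d : CornerDualBasis e)

lemma sum_smul_ofElement (φ : HomEA e N) :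
    ∑ j, (d.z j : A) • ofElement e (φ (d.x j)) = φ := by
  ext v
  rw [LinearMap.sum_apply]
  conv_rhs => rw [← d.sum_etaMap_smul v, map_sum]
  refine Finset.sum_congr rfl fun j _ => ?_
  rw [smul_apply, ofElement_apply, map_smul]
  congr 1
  exact Subtype.ext (show (v : A) * d.z j * e = v * d.z j by rw [mul_assoc, (d.z j).2])

lemma coe_apply_smul_apply (g : N →ₗ[Corner A e] EMod e M) (φ : HomEA e N) (a : A)
    (j : Fin d.n) :
    (g ((a • φ) (d.x j)) : M) = ∑ i, ((d.x j : A) * a * d.z i) • (g (φ (d.x i)) : M) := by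
  rw [smul_apply, ← d.sum_etaMap_smul (EA.mulRight a (d.x j)), map_sum, map_sum,
    AddSubgroup.val_finsetSum]
  simp only [map_smul, EMod.coe_smul]
  rfl

/-- The adjunction `Hom(eA, -) ⊣ e(-)`, which holds because the dual basis identifies
`Hom(eA, -)` with `Ae ⊗_{eAe} -`. -/
noncomputable def homEquiv : (HomEA e N →ₗ[A] M) ≃ (N →ₗ[Corner A e] EMod e M) where
  toFun h :=
    { toFun n := ⟨h (ofElement e n),
        show e • h _ = h _ by rw [← map_smul, idem_smul_ofElement]⟩
      map_add' n n' := Subtype.ext (by simp only [ofElement_add, map_add]; rfl)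
      map_smul' s n := Subtype.ext (by simp only [ofElement_smul, map_smul]; rfl) }
  invFun g :=
    { toFun φ := ∑ j, (d.z j : A) • (g (φ (d.x j)) : M)
      map_add' φ ψ := by
        simp only [LinearMap.add_apply, map_add, AddSubgroup.coe_add, smul_add,
          Finset.sum_add_distrib]
      map_smul' a φ := by
        simp only [coe_apply_smul_apply, RingHom.id_apply]
        exact d.sum_smul_sum_smul a _ }
  left_inv h := LinearMap.ext fun φ => by
    change ∑ j, (d.z j : A) • h (ofElement e (φ (d.x j))) = h φ
    simp only [← map_smul, ← map_sum, sum_smul_ofElement]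
  right_inv g := LinearMap.ext fun n => Subtype.ext <| by
    change ∑ j, (d.z j : A) • (g (ofElement e n (d.x j)) : M) = g n
    have hsum : ∑ j, (d.z j : A) * (d.x j * e) = e := by
      have h : ∑ j, (d.z j : A) * d.x j * e = e := d.sum_ae (AE.idem A e)
      simpa only [mul_assoc] using h
    simp only [ofElement_apply, map_smul, EMod.coe_smul, coe_etaMap, smul_smul, ← Finset.sum_smul]
    rw [AE.idem, hsum]
    exact (g n).2

lemma homEquiv_comp (H : HomEA e N' →ₗ[A] M) (j : N →ₗ[Corner A e] N') :
    homEquiv d (H ∘ₗ map e j) = homEquiv d H ∘ₗ j :=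
  LinearMap.ext fun n => Subtype.ext (congrArg H (map_ofElement j n))

lemma homEquiv_symm_comp (ℓ : N →ₗ[Corner A e] EMod e M) (s : M →ₗ[A] M') :
    (homEquiv d).symm (EMod.map e s ∘ₗ ℓ) = s ∘ₗ (homEquiv d).symm ℓ :=
  LinearMap.ext fun φ => by
    change ∑ j, (d.z j : A) • s (ℓ (φ (d.x j))) =
      s (∑ j, (d.z j : A) • (ℓ (φ (d.x j)) : M))
    simp only [map_sum, map_smul]

end HomEA

lemma HomEA.projective {N : Type u} [AddCommGroup N] [Module (Corner A e) N]
    (d : CornerDualBasis e) (hN : Module.Projective (Corner A e) N) :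
    Module.Projective A (HomEA e N) := by
  refine Module.Projective.of_lifting_property fun s g hs => ?_
  obtain ⟨ℓ, hℓ⟩ := Module.projective_lifting_property (EMod.map e s) (HomEA.homEquiv d g)
    (EMod.map_surjective hs)
  exact ⟨(HomEA.homEquiv d).symm ℓ,
    by rw [← HomEA.homEquiv_symm_comp, hℓ, Equiv.symm_apply_apply]⟩

lemma EMod.injective {M : Type u} [AddCommGroup M] [Module A M] (d : CornerDualBasis e)
    (hM : Module.Injective A M) : Module.Injective (Corner A e) (EMod e M) := by
  refine ⟨fun X Y _ _ _ _ j hj g => ?_⟩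
  obtain ⟨H, hH⟩ := hM.out (HomEA.map e j) (HomEA.map_injective hj) ((HomEA.homEquiv d).symm g)
  have hH' : H ∘ₗ HomEA.map e j = (HomEA.homEquiv d).symm g := LinearMap.ext hH
  refine ⟨HomEA.homEquiv d H, fun x => ?_⟩
  change (HomEA.homEquiv d H ∘ₗ j) x = g x
  rw [← HomEA.homEquiv_comp, hH', Equiv.apply_symm_apply]

theorem domdimGE_eMod [Module.Projective (Corner A e) (EA A e)] (d : CornerDualBasis e)
    {n : ℕ} : ∀ {M : Type u} [AddCommGroup M] [Module A M],
    domdimGE A n M → domdimGE (Corner A e) n (EMod e M) := by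
  induction n with
  | zero => intros; trivial
  | succ n ih =>
    rintro M _ _ ⟨I, _, _, hP, hI, f, hf, hQ⟩
    exact ⟨EMod e I, _, _, EMod.projective hP, EMod.injective d hI, EMod.map e f,
      EMod.map_injective hf, domdimGE_of_linearEquiv (EMod.quotEquiv e f).symm (ih hQ)⟩

theorem domdimGE_homEA [Module.Projective (Corner A e) (EA A e)] (d : CornerDualBasis e)
    {n : ℕ} : ∀ {N : Type u} [AddCommGroup N] [Module (Corner A e) N],
    domdimGE (Corner A e) n N → domdimGE A n (HomEA e N) := by
  induction n with
  | zero => intros; trivial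
  | succ n ih =>
    rintro N _ _ ⟨I, _, _, hP, hI, f, hf, hQ⟩
    exact ⟨HomEA e I, _, _, HomEA.projective d hP, HomEA.injective hI, HomEA.map e f,
      HomEA.map_injective hf, domdimGE_of_linearEquiv (HomEA.quotEquiv e f hf).symm (ih hQ)⟩

variable (e) in
noncomputable def EMod.selfEquiv : EMod e A ≃ₗ[Corner A e] EA A e where
  toFun v := ⟨v, v.2⟩
  invFun v := ⟨v, v.2⟩
  map_add' _ _ := rfl
  map_smul' _ _ := rfl
  left_inv _ := rfl
  right_inv _ := rfl

variable (e) in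
noncomputable def Corner.toEA : Corner A e →ₗ[Corner A e] EA A e where
  toFun s := ⟨s, corner_left_mul Fact.out s⟩
  map_add' _ _ := rfl
  map_smul' _ _ := rfl

variable (e) in
noncomputable def EA.toCorner : EA A e →ₗ[Corner A e] Corner A e where
  toFun v := ⟨v * e, show e * (v * e) * e = v * e by
    rw [← mul_assoc, v.2, mul_assoc, (Fact.out : e * e = e)]⟩
  map_add' v w := Subtype.ext (add_mul (v : A) w e)
  map_smul' s v := Subtype.ext (mul_assoc (s : A) v e)

lemma EA.toCorner_comp_toEA : EA.toCorner e ∘ₗ Corner.toEA e = LinearMap.id :=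
  LinearMap.ext fun s => Subtype.ext (corner_right_mul Fact.out s)

noncomputable def etaEquiv (hη : Function.Bijective (etaMap A e Fact.out)) :
    AE A e ≃ₗ[A] HomEA e (Corner A e) :=
  LinearEquiv.ofBijective
    { toFun := etaMap A e Fact.out
      map_add' w w' := LinearMap.ext fun v => Subtype.ext (mul_add (v : A) w w')
      map_smul' a w := by
        ext v
        exact (mul_assoc (v : A) a w).symm } hη

lemma EA.finite_of_finiteDimensional (k : Type u) [Field k] [Algebra k A] [FiniteDimensional k A] :
    Module.Finite (Corner A e) (EA A e) := by
  classical
  have he : e * e = e := Fact.out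
  obtain ⟨m, s, hs⟩ := Module.Finite.exists_fin (R := k) (M := A)
  let w (j : Fin m) : EA A e :=
    ⟨e * s j, show e * (e * s j) = e * s j by rw [← mul_assoc, he]⟩
  let scalar (c : k) : Corner A e :=
    ⟨c • e, show e * (c • e) * e = c • e by rw [mul_smul_comm, smul_mul_assoc, he, he]⟩
  have hspan : Submodule.span (Corner A e) (Set.range w) = ⊤ := by
    refine Submodule.eq_top_iff'.mpr fun v => ?_
    obtain ⟨c, hc⟩ := (Submodule.mem_span_range_iff_exists_fun k).mp
      (hs ▸ Submodule.mem_top : (v : A) ∈ Submodule.span k (Set.range s))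
    refine (Submodule.mem_span_range_iff_exists_fun _).mpr ⟨fun j => scalar (c j), ?_⟩
    refine Subtype.ext ?_
    rw [AddSubmonoidClass.coe_finsetSum, ← v.2, ← hc, Finset.mul_sum]
    refine Finset.sum_congr rfl fun j _ => ?_
    change (c j • e) * (e * s j) = e * (c j • s j)
    rw [smul_mul_assoc, ← mul_assoc, he, mul_smul_comm]
  exact ⟨⟨Finset.univ.image w,
    by rw [Finset.coe_image, Finset.coe_univ, Set.image_univ, hspan]⟩⟩

lemma sum_ae_of_sum_ea (hη : Function.Injective (etaMap A e Fact.out)) {n : ℕ}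
    (x : Fin n → EA A e) (z : Fin n → AE A e)
    (h : ∀ v : EA A e, ∑ j, (v : A) * z j * x j = v)
    (w : AE A e) : ∑ j, (z j : A) * x j * w = w := by
  let w' : AE A e := ⟨∑ j, (z j : A) * x j * w, by
    show (∑ j, (z j : A) * x j * w) * e = _
    rw [Finset.sum_mul]
    exact Finset.sum_congr rfl fun j _ => by rw [mul_assoc, (w.2 : (w : A) * e = w)]⟩
  have hw' : w' = w := hη <| LinearMap.ext fun v => Subtype.ext <| by
    change (v : A) * ∑ j, (z j : A) * x j * w = v * w
    conv_rhs => rw [← h v]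
    simp only [Finset.mul_sum, Finset.sum_mul, mul_assoc]
  exact congrArg Subtype.val hw'

lemma CornerDualBasis.nonempty [Module.Finite (Corner A e) (EA A e)]
    [Module.Projective (Corner A e) (EA A e)] (hη : Function.Bijective (etaMap A e Fact.out)) :
    Nonempty (CornerDualBasis e) := by
  classical
  obtain ⟨m, p, hp⟩ := Module.Finite.exists_fin' (Corner A e) (EA A e)
  obtain ⟨σ, hσ⟩ := Module.projective_lifting_property p LinearMap.id hp
  choose z hz using fun j => hη.2 (LinearMap.proj j ∘ₗ σ)
  let x (j : Fin m) : EA A e := p fun i => if j = i then 1 else 0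
  have hx (v : EA A e) : ∑ j, (v : A) * z j * x j = v := by
    have hv : ∑ j, σ v j • x j = v := by
      rw [← LinearMap.pi_apply_eq_sum_univ p (σ v)]
      exact LinearMap.congr_fun hσ v
    conv_rhs => rw [← hv]
    rw [AddSubmonoidClass.coe_finsetSum]
    refine Finset.sum_congr rfl fun j _ => ?_
    rw [show σ v j = etaMap A e Fact.out (z j) v from (LinearMap.congr_fun (hz j) v).symm]
    rfl
  exact ⟨⟨m, x, z, hx, sum_ae_of_sum_ea hη.1 x z hx⟩⟩

end Corner

theorem stmt14 (k : Type u) [Field k] (A : Type u) [Ring A] [Algebra k A]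
    [FiniteDimensional k A] (e : A) (he : e * e = e)
    (hproj :
      letI := cornerRing A e he
      letI := eaModule A e he
      Module.Projective (Corner A e) (EA A e))
    (hbij : Function.Bijective (etaMap A e he)) :
    (∀ n : ℕ,
      domdimGE A n A →
        (letI := cornerRing A e he
         domdimGE (Corner A e) n (Corner A e))) ∧
    (∀ n : ℕ,
      (letI := cornerRing A e he
       domdimGE (Corner A e) n (Corner A e)) →
        domdimGE A n (AE A e)) := by
  have : Fact (e * e = e) := ⟨he⟩
  have : Module.Projective (Corner A e) (EA A e) := hproj
  have := EA.finite_of_finiteDimensional (e := e) k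
  obtain ⟨d⟩ := CornerDualBasis.nonempty hbij
  refine ⟨fun n h => ?_, fun n h => ?_⟩
  · exact domdimGE_of_retract (Corner.toEA e) (EA.toCorner e) EA.toCorner_comp_toEA
      (domdimGE_of_linearEquiv (EMod.selfEquiv e) (domdimGE_eMod d h))
  · exact domdimGE_of_linearEquiv (etaEquiv hbij).symm (domdimGE_homEA d h)
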